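/- arXiv:2408.04634 — 2 statements merged into one kernel-verified Lean document; each statement's English description precedes it below -/
import Mathlib

section
/- If F : ℝ → ℝ is Borel measurable and F ∘ f ∈ L¹(Ω), then F ∘ f* ∈ L¹(0,|Ω|) and ∫_Ω F(f(x)) dx = ∫_0^{|Ω|} F(f*(s)) ds. -/
open MeasureTheory Set Filter Topology
open scoped ENNReal

noncomputable section

/-- Distribution function `d_f(t) = |{x ∈ Ω : f x > t}|`. -/
def distrib {N : ℕ} (Ω : Set (Fin N → ℝ)) (f : (Fin N → ℝ) → ℝ) (t : ℝ) : ℝ≥0∞ :=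
  volume {x ∈ Ω | t < f x}

/-- Equimeasurability of two functions on `Ω`. -/
def EquiMeas {N : ℕ} (Ω : Set (Fin N → ℝ)) (f g : (Fin N → ℝ) → ℝ) : Prop :=
  ∀ t : ℝ, distrib Ω f t = distrib Ω g t

/-- Decreasing rearrangement `f*(s) = sup {t : d_f(t) > s}`. -/
def decRearr {N : ℕ} (Ω : Set (Fin N → ℝ)) (f : (Fin N → ℝ) → ℝ) (s : ℝ) : ℝ :=
  sSup {t : ℝ | ENNReal.ofReal s < distrib Ω f t}

/-- Hardy–Littlewood–Pólya order `g ≺ f`. -/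
def Prec {N : ℕ} (Ω : Set (Fin N → ℝ)) (g f : (Fin N → ℝ) → ℝ) : Prop :=
  (∀ t ∈ Icc (0 : ℝ) (volume Ω).toReal,
      ∫ s in Ioo (0 : ℝ) t, decRearr Ω g s ≤ ∫ s in Ioo (0 : ℝ) t, decRearr Ω f s) ∧
  ∫ s in Ioo (0 : ℝ) (volume Ω).toReal, decRearr Ω g s
    = ∫ s in Ioo (0 : ℝ) (volume Ω).toReal, decRearr Ω f s

/-!
For `s < |Ω|`, right-continuity of `d_f` gives `a < f*(s) ↔ s < d_f(a)`. Hence `{f* > a}` is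
the interval `(0, d_f(a))`, so `f*` on `(0, |Ω|)` and `f` on `Ω` have the same distribution, and
the integrals of `F ∘ f*` and `F ∘ f` agree by the change of variables formula for image measures.
-/

lemma exists_gt_lt_measure_Ioi {ν : Measure ℝ} {r : ℝ≥0∞} {t : ℝ} (h : r < ν (Ioi t)) :
    ∃ t' > t, r < ν (Ioi t') := by
  obtain ⟨u, hu_anti, htu, hu_lim⟩ := exists_seq_strictAnti_tendsto t
  have hunion : ⋃ n, Ioi (u n) = Ioi t :=
    (isGLB_of_tendsto_atTop hu_anti.antitone hu_lim).iUnion_Ioi_eq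
  have hmono : Monotone fun n => Ioi (u n) := fun _ _ hmn => Ioi_subset_Ioi (hu_anti.antitone hmn)
  rw [← hunion, hmono.measure_iUnion] at h
  obtain ⟨n, hn⟩ := lt_iSup_iff.1 h
  exact ⟨u n, htu n, hn⟩

lemma exists_lt_measure_Ioi {ν : Measure ℝ} {r : ℝ≥0∞} (h : r < ν univ) :
    ∃ t, r < ν (Ioi t) := by
  rw [← iUnion_Ioi, antitone_Ioi.measure_iUnion] at h
  exact lt_iSup_iff.1 h

section Rearrangement

variable {N : ℕ} {Ω : Set (Fin N → ℝ)} {f : (Fin N → ℝ) → ℝ}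

lemma distrib_antitone : Antitone (distrib Ω f) := fun _ _ hab =>
  measure_mono fun _ hx => ⟨hx.1, hab.trans_lt hx.2⟩

lemma distrib_le_volume (t : ℝ) : distrib Ω f t ≤ volume Ω :=
  measure_mono (sep_subset _ _)

lemma distrib_eq_map_apply_Ioi (hf : Measurable f) (t : ℝ) :
    distrib Ω f t = (volume.restrict Ω).map f (Ioi t) := by
  rw [Measure.map_apply hf measurableSet_Ioi, Measure.restrict_apply (hf measurableSet_Ioi),
    distrib, inter_comm]
  rfl

lemma lt_of_lt_distrib (hf : Measurable f) {C : ℝ} (hC : ∀ᵐ x ∂volume.restrict Ω, f x ≤ C)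
    {r : ℝ≥0∞} {t : ℝ} (h : r < distrib Ω f t) : t < C := by
  by_contra! hCt
  have hnull : (volume.restrict Ω).map f (Ioi C) = 0 := by
    rw [← compl_Iic]
    exact ae_iff.1 ((ae_map_iff hf.aemeasurable measurableSet_Iic).2 hC)
  rw [distrib_eq_map_apply_Ioi hf, measure_mono_null (Ioi_subset_Ioi hCt) hnull] at h
  exact not_lt_zero h

lemma lt_decRearr_iff (hf : Measurable f) {C : ℝ} (hC : ∀ᵐ x ∂volume.restrict Ω, f x ≤ C)
    {s : ℝ} (hs : ENNReal.ofReal s < volume Ω) (a : ℝ) :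
    a < decRearr Ω f s ↔ ENNReal.ofReal s < distrib Ω f a := by
  have hbdd : BddAbove {t | ENNReal.ofReal s < distrib Ω f t} :=
    ⟨C, fun _ ht => (lt_of_lt_distrib hf hC ht).le⟩
  have hne : {t | ENNReal.ofReal s < distrib Ω f t}.Nonempty := by
    have huniv : (volume.restrict Ω).map f univ = volume Ω := by
      rw [Measure.map_apply hf MeasurableSet.univ, preimage_univ, Measure.restrict_apply_univ]
    simpa only [Set.Nonempty, mem_ofPred_eq, distrib_eq_map_apply_Ioi hf]
      using exists_lt_measure_Ioi (huniv ▸ hs)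
  rw [decRearr, lt_csSup_iff hbdd hne]
  constructor
  · rintro ⟨t, ht, hat⟩
    exact ht.trans_le (distrib_antitone hat.le)
  · intro ha
    rw [distrib_eq_map_apply_Ioi hf] at ha
    obtain ⟨t, hat, ht⟩ := exists_gt_lt_measure_Ioi ha
    exact ⟨t, by rwa [mem_ofPred_eq, distrib_eq_map_apply_Ioi hf], hat⟩

variable (hf : Measurable f) {C : ℝ} (hC : ∀ᵐ x ∂volume.restrict Ω, f x ≤ C)
  (hfin : volume Ω ≠ ∞)
include hf hC hfin

lemma decRearr_antitoneOn : AntitoneOn (decRearr Ω f) (Ioo 0 (volume Ω).toReal) := by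
  intro s hs s' hs' hss'
  have hlt {u : ℝ} (hu : u ∈ Ioo 0 (volume Ω).toReal) : ENNReal.ofReal u < volume Ω :=
    (ENNReal.ofReal_lt_iff_lt_toReal hu.1.le hfin).2 hu.2
  refine le_of_forall_lt fun a ha => ?_
  rw [lt_decRearr_iff hf hC (hlt hs')] at ha
  exact (lt_decRearr_iff hf hC (hlt hs) a).2 ((ENNReal.ofReal_le_ofReal hss').trans_lt ha)

lemma preimage_decRearr_Ioi_inter_Ioo (a : ℝ) :
    decRearr Ω f ⁻¹' Ioi a ∩ Ioo 0 (volume Ω).toReal = Ioo 0 (distrib Ω f a).toReal := by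
  have hd : distrib Ω f a ≠ ∞ := ne_top_of_le_ne_top hfin (distrib_le_volume a)
  have hle : (distrib Ω f a).toReal ≤ (volume Ω).toReal :=
    ENNReal.toReal_mono hfin (distrib_le_volume a)
  ext s
  simp only [mem_inter_iff, mem_preimage, mem_Ioi, mem_Ioo]
  constructor
  · rintro ⟨ha, hs0, hsT⟩
    rw [lt_decRearr_iff hf hC ((ENNReal.ofReal_lt_iff_lt_toReal hs0.le hfin).2 hsT),
      ENNReal.ofReal_lt_iff_lt_toReal hs0.le hd] at ha
    exact ⟨hs0, ha⟩
  · rintro ⟨hs0, hsd⟩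
    have hsT := hsd.trans_le hle
    rw [lt_decRearr_iff hf hC ((ENNReal.ofReal_lt_iff_lt_toReal hs0.le hfin).2 hsT),
      ENNReal.ofReal_lt_iff_lt_toReal hs0.le hd]
    exact ⟨hsd, hs0, hsT⟩

open ProbabilityTheory in
theorem identDistrib_decRearr :
    IdentDistrib (decRearr Ω f) f (volume.restrict (Ioo 0 (volume Ω).toReal))
      (volume.restrict Ω) := by
  have haem : AEMeasurable (decRearr Ω f) (volume.restrict (Ioo 0 (volume Ω).toReal)) :=
    aemeasurable_restrict_of_antitoneOn measurableSet_Ioo (decRearr_antitoneOn hf hC hfin)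
  have hmap_Ioi (a : ℝ) :
      (volume.restrict (Ioo 0 (volume Ω).toReal)).map (decRearr Ω f) (Ioi a)
        = (volume.restrict Ω).map f (Ioi a) := by
    rw [Measure.map_apply_of_aemeasurable haem measurableSet_Ioi,
      Measure.restrict_apply' measurableSet_Ioo, preimage_decRearr_Ioi_inter_Ioo hf hC hfin,
      Real.volume_Ioo, sub_zero, ENNReal.ofReal_toReal (ne_top_of_le_ne_top hfin
        (distrib_le_volume a)), distrib_eq_map_apply_Ioi hf]
  have : IsFiniteMeasure ((volume.restrict Ω).map f) := by
    have : Fact (volume Ω < ∞) := ⟨hfin.lt_top⟩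
    infer_instance
  refine ⟨haem, hf.aemeasurable, ?_⟩
  refine (ext_of_generate_finite (range Ioi) (borel_eq_generateFrom_Ioi ℝ) isPiSystem_Ioi
    ?_ ?_).symm
  · rintro _ ⟨a, rfl⟩
    exact (hmap_Ioi a).symm
  · rw [← iUnion_Ioi, antitone_Ioi.measure_iUnion, antitone_Ioi.measure_iUnion]
    simp only [hmap_Ioi]

end Rearrangement

theorem integral_comp_eq_integral_comp_decRearr_general
    (N : ℕ) (Ω : Set (Fin N → ℝ)) (hΩb : Bornology.IsBounded Ω)
    (f : (Fin N → ℝ) → ℝ) (hf : Measurable f)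
    (hbd : ∃ C : ℝ, ∀ᵐ x ∂(volume.restrict Ω), |f x| ≤ C)
    (F : ℝ → ℝ) (hF : Measurable F)
    (hint : IntegrableOn (F ∘ f) Ω) :
    IntegrableOn (F ∘ decRearr Ω f) (Ioo 0 (volume Ω).toReal) ∧
    ∫ x in Ω, F (f x) = ∫ s in Ioo (0 : ℝ) (volume Ω).toReal, F (decRearr Ω f s) := by
  obtain ⟨C, hC⟩ := hbd
  have hC' : ∀ᵐ x ∂volume.restrict Ω, f x ≤ C := hC.mono fun x hx => (le_abs_self _).trans hx
  have h := (identDistrib_decRearr hf hC' hΩb.measure_lt_top.ne).comp hF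
  exact ⟨h.integrable_iff.2 hint, h.integral_eq.symm⟩

theorem integral_comp_eq_integral_comp_decRearr
    (N : ℕ) (Ω : Set (Fin N → ℝ)) (hΩo : IsOpen Ω) (hΩb : Bornology.IsBounded Ω)
    (f : (Fin N → ℝ) → ℝ) (hf : Measurable f)
    (hbd : ∃ C : ℝ, ∀ᵐ x ∂(volume.restrict Ω), |f x| ≤ C)
    (F : ℝ → ℝ) (hF : Measurable F)
    (hint : IntegrableOn (F ∘ f) Ω) :
    IntegrableOn (F ∘ decRearr Ω f) (Ioo 0 (volume Ω).toReal) ∧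
    ∫ x in Ω, F (f x) = ∫ s in Ioo (0 : ℝ) (volume Ω).toReal, F (decRearr Ω f s) :=
  integral_comp_eq_integral_comp_decRearr_general N Ω hΩb f hf hbd F hF hint
end
end

section
/- The map m ↦ G_m from L^∞(Ω) to bounded operators on H¹₀(Ω) is sequentially weak*-to-norm continuous: if m_i ⇀* m in L^∞(Ω), then ‖G_{m_i} − G_m‖_{op} → 0. -/
open MeasureTheory Set Filter Topology
open scoped ENNReal RealInnerProductSpace

noncomputable section

/-!
Put `w_n = m_n - m`. Then `⟪(G_{m_n} - G_m) f, φ⟫ = ⟪w_n · ι f, ι φ⟫` in `L²`, and the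
multiplication operators by `w_n` are bounded by `2M` and tend to `0` in the weak operator
topology: testing the weak* convergence against `u v ∈ L¹` gives `⟪w_n · u, v⟫ → 0`. A uniformly
bounded family of bilinear forms is equicontinuous, so pointwise convergence is uniform on the
compact set `K × K`, where `K` contains the image of the closed unit ball under the compact map
`ι`; and uniform smallness of `⟪(G_{m_n} - G_m) f, φ⟫` over unit vectors bounds the operator norm.
-/

section InnerBounds

variable {E F : Type*} [NormedAddCommGroup E] [InnerProductSpace ℝ E]
  [NormedAddCommGroup F] [InnerProductSpace ℝ F]

theorem ContinuousLinearMap.opNorm_le_of_abs_inner_le (A : E →L[ℝ] F) {ε : ℝ} (hε : 0 ≤ ε)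
    (h : ∀ f φ, ‖f‖ = 1 → ‖φ‖ = 1 → |⟪A f, φ⟫| ≤ ε) : ‖A‖ ≤ ε :=
  A.opNorm_le_of_unit_norm hε fun f hf => by
    rw [← innerSL_apply_norm ℝ]
    exact (innerSL ℝ (A f)).opNorm_le_of_unit_norm hε fun φ hφ => by
      simpa using h f φ hf hφ

theorem ContinuousLinearMap.abs_inner_apply_sub_inner_apply_le (T : E →L[ℝ] F) (u a : E)
    (v b : F) : |⟪T u, v⟫ - ⟪T a, b⟫| ≤ ‖T‖ * (‖u - a‖ * ‖v‖ + ‖a‖ * ‖v - b‖) := by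
  have hsplit : ⟪T u, v⟫ - ⟪T a, b⟫ = ⟪T (u - a), v⟫ + ⟪T a, v - b⟫ := by
    rw [map_sub, inner_sub_left, inner_sub_right]
    ring
  calc |⟪T u, v⟫ - ⟪T a, b⟫| ≤ ‖T (u - a)‖ * ‖v‖ + ‖T a‖ * ‖v - b‖ := by
        rw [hsplit]
        exact (abs_add_le _ _).trans
          (add_le_add (abs_real_inner_le_norm _ _) (abs_real_inner_le_norm _ _))
    _ ≤ ‖T‖ * ‖u - a‖ * ‖v‖ + ‖T‖ * ‖a‖ * ‖v - b‖ := by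
        gcongr <;> exact T.le_opNorm _
    _ = ‖T‖ * (‖u - a‖ * ‖v‖ + ‖a‖ * ‖v - b‖) := by ring

theorem eventually_forall_abs_inner_le_of_isCompact {α : Type*} {l : Filter α}
    {T : α → E →L[ℝ] F} {C : ℝ} (hT : ∀ i, ‖T i‖ ≤ C)
    (hweak : ∀ u v, Tendsto (fun i => ⟪T i u, v⟫) l (𝓝 0))
    {K : Set E} {L : Set F} (hK : IsCompact K) (hL : IsCompact L) {ε : ℝ} (hε : 0 < ε) :
    ∀ᶠ i in l, ∀ u ∈ K, ∀ v ∈ L, |⟪T i u, v⟫| ≤ ε := by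
  obtain ⟨RK, hRK, hKR⟩ := hK.isBounded.exists_pos_norm_le
  obtain ⟨RL, -, hLR⟩ := hL.isBounded.exists_pos_norm_le
  obtain ⟨δ, hδ, hCδ⟩ := exists_pos_mul_lt (half_pos hε) (C * (RK + RL))
  obtain ⟨s, hsK, hKs⟩ :=
    hK.elim_nhds_subcover (fun u => Metric.ball u δ) fun u _ => Metric.ball_mem_nhds u hδ
  obtain ⟨t, -, hLt⟩ :=
    hL.elim_nhds_subcover (fun v => Metric.ball v δ) fun v _ => Metric.ball_mem_nhds v hδ
  have hnet : ∀ᶠ i in l, ∀ a ∈ s, ∀ b ∈ t, |⟪T i a, b⟫| < ε / 2 := by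
    simp only [eventually_all_finset]
    intro a _ b _
    exact (hweak a b).abs.eventually (gt_mem_nhds (by simpa using half_pos hε))
  filter_upwards [hnet] with i hi u hu v hv
  obtain ⟨a, ha, hua⟩ := mem_iUnion₂.mp (hKs hu)
  obtain ⟨b, hb, hvb⟩ := mem_iUnion₂.mp (hLt hv)
  rw [mem_ball_iff_norm] at hua hvb
  have hclose : ‖u - a‖ * ‖v‖ + ‖a‖ * ‖v - b‖ ≤ (RK + RL) * δ := by
    have := mul_le_mul hua.le (hLR v hv) (norm_nonneg _) hδ.le
    have := mul_le_mul (hKR a (hsK a ha)) hvb.le (norm_nonneg _) hRK.le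
    linarith
  have hfar : ‖T i‖ * (‖u - a‖ * ‖v‖ + ‖a‖ * ‖v - b‖) ≤ C * (RK + RL) * δ := by
    rw [mul_assoc]
    exact mul_le_mul (hT i) hclose (by positivity) ((norm_nonneg _).trans (hT i))
  have := (T i).abs_inner_apply_sub_inner_apply_le u a v b
  have := abs_sub_abs_le_abs_sub ⟪T i u, v⟫ ⟪T i a, b⟫
  have := hi a ha b hb
  linarith

end InnerBounds

theorem IsCompactOperator.tendsto_norm_zero_of_inner_eq {H F : Type*} [NormedAddCommGroup H]
    [InnerProductSpace ℝ H] [NormedAddCommGroup F] [InnerProductSpace ℝ F]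
    {ι : H →L[ℝ] F} (hι : IsCompactOperator ι) {α : Type*} {l : Filter α}
    {A : α → H →L[ℝ] H} {T : α → F →L[ℝ] F} {C : ℝ}
    (hA : ∀ i f φ, ⟪A i f, φ⟫ = ⟪T i (ι f), ι φ⟫) (hT : ∀ i, ‖T i‖ ≤ C)
    (hweak : ∀ u v, Tendsto (fun i => ⟪T i u, v⟫) l (𝓝 0)) :
    Tendsto (fun i => ‖A i‖) l (𝓝 0) := by
  obtain ⟨K, hK, hιK⟩ := hι.image_closedBall_subset_compact (f := (ι : H →ₗ[ℝ] F)) 1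
  have hιK' (f : H) (hf : ‖f‖ = 1) : ι f ∈ K := hιK ⟨f, by simp [hf], rfl⟩
  refine NormedAddGroup.tendsto_nhds_zero.2 fun ε hε => ?_
  filter_upwards [eventually_forall_abs_inner_le_of_isCompact hT hweak hK hK (half_pos hε)]
    with i hi
  have : ‖A i‖ ≤ ε / 2 := (A i).opNorm_le_of_abs_inner_le (half_pos hε).le fun f φ hf hφ => by
    rw [hA]
    exact hi _ (hιK' f hf) _ (hιK' φ hφ)
  rw [norm_norm]
  linarith

theorem MeasureTheory.Lp.norm_toLp_top_le {X E : Type*} [MeasurableSpace X] {μ : Measure X}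
    [NormedAddCommGroup E] {f : X → E} (hf : MemLp f ∞ μ) {C : ℝ} (hC : 0 ≤ C)
    (hfC : ∀ᵐ x ∂μ, ‖f x‖ ≤ C) : ‖hf.toLp f‖ ≤ C := by
  rw [Lp.norm_toLp, eLpNorm_exponent_top]
  exact ENNReal.toReal_le_of_le_ofReal hC (eLpNormEssSup_le_of_ae_bound hfC)

namespace MeasureTheory.L2

variable {X : Type*} [MeasurableSpace X] {μ : Measure X}

def mulL (w : Lp ℝ ∞ μ) : Lp ℝ 2 μ →L[ℝ] Lp ℝ 2 μ :=
  (ContinuousLinearMap.mul ℝ ℝ).holderL μ ∞ 2 2 w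

theorem norm_mulL_le (w : Lp ℝ ∞ μ) : ‖mulL w‖ ≤ ‖w‖ :=
  calc ‖mulL w‖ ≤ ‖(ContinuousLinearMap.mul ℝ ℝ).holderL μ ∞ 2 2‖ * ‖w‖ :=
        ContinuousLinearMap.le_opNorm _ w
    _ ≤ ‖w‖ := mul_le_of_le_one_left (norm_nonneg w)
        ((ContinuousLinearMap.norm_holderL_le _).trans (ContinuousLinearMap.opNorm_mul_le ℝ ℝ))

theorem inner_mulL_toLp {w : X → ℝ} (hw : MemLp w ∞ μ) (u v : Lp ℝ 2 μ) :
    ⟪mulL (hw.toLp w) u, v⟫ = ∫ x, w x * u x * v x ∂μ := by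
  rw [L2.inner_def]
  refine integral_congr_ae ?_
  filter_upwards [(ContinuousLinearMap.mul ℝ ℝ).coeFn_holder (r := 2) (hw.toLp w) u,
    hw.coeFn_toLp] with x hx hwx
  simp [mulL, hx, hwx, mul_comm]

end MeasureTheory.L2

theorem Gm_weakStar_to_norm_continuous_general
    (N : ℕ) (Ω : Set (Fin N → ℝ))
    (H : Type) [NormedAddCommGroup H] [InnerProductSpace ℝ H]
    (ι : H →L[ℝ] Lp ℝ 2 (volume.restrict Ω)) (hι : IsCompactOperator ι)
    (mseq : ℕ → (Fin N → ℝ) → ℝ) (m : (Fin N → ℝ) → ℝ)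
    (hmseq : ∀ n, Measurable (mseq n)) (hm : Measurable m)
    (M : ℝ) (hMseq : ∀ n, ∀ᵐ x ∂(volume.restrict Ω), |mseq n x| ≤ M)
    (hM : ∀ᵐ x ∂(volume.restrict Ω), |m x| ≤ M)
    -- weak* convergence `mseq n ⇀* m` in `L^∞(Ω)`
    (hweak : ∀ g : (Fin N → ℝ) → ℝ, IntegrableOn g Ω →
      Tendsto (fun n => ∫ x in Ω, mseq n x * g x) atTop (𝓝 (∫ x in Ω, m x * g x)))
    (Gseq : ℕ → H →L[ℝ] H) (G : H →L[ℝ] H)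
    (hGseq : ∀ n, ∀ f φ : H, ⟪Gseq n f, φ⟫ =
      ∫ x in Ω, mseq n x * (ι f : (Fin N → ℝ) → ℝ) x * (ι φ : (Fin N → ℝ) → ℝ) x)
    (hG : ∀ f φ : H, ⟪G f, φ⟫ =
      ∫ x in Ω, m x * (ι f : (Fin N → ℝ) → ℝ) x * (ι φ : (Fin N → ℝ) → ℝ) x) :
    Tendsto (fun n => ‖Gseq n - G‖) atTop (𝓝 0) := by
  have hmem {w : (Fin N → ℝ) → ℝ} (hwm : Measurable w)
      (hw : ∀ᵐ x ∂(volume.restrict Ω), |w x| ≤ M) : MemLp w ∞ (volume.restrict Ω) :=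
    memLp_top_of_bound hwm.aestronglyMeasurable M hw
  -- `M` may be negative when `Ω` is null
  have hnorm {w : (Fin N → ℝ) → ℝ} (hwm : Measurable w)
      (hw : ∀ᵐ x ∂(volume.restrict Ω), |w x| ≤ M) :
      ‖L2.mulL ((hmem hwm hw).toLp w)‖ ≤ max M 0 :=
    (L2.norm_mulL_le _).trans <| Lp.norm_toLp_top_le _ (le_max_right M 0) <|
      hw.mono fun x hx => hx.trans (le_max_left M 0)
  let T n := L2.mulL ((hmem (hmseq n) (hMseq n)).toLp _) - L2.mulL ((hmem hm hM).toLp m)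
  have hT n u v : ⟪T n u, v⟫ =
      (∫ x in Ω, mseq n x * (u x * v x)) - ∫ x in Ω, m x * (u x * v x) := by
    simp only [T, sub_apply, inner_sub_left, L2.inner_mulL_toLp, mul_assoc]
  refine hι.tendsto_norm_zero_of_inner_eq (T := T) (C := max M 0 + max M 0) ?_ ?_ ?_
  · intro n f φ
    rw [hT, sub_apply, inner_sub_left, hGseq, hG]
    simp only [mul_assoc]
  · exact fun n => (norm_sub_le _ _).trans (add_le_add (hnorm (hmseq n) (hMseq n)) (hnorm hm hM))
  · intro u v
    simp only [hT]
    exact tendsto_sub_nhds_zero_iff.2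
      (hweak (fun x => u x * v x) ((Lp.memLp u).integrable_mul (Lp.memLp v)))

theorem Gm_weakStar_to_norm_continuous
    (N : ℕ) (Ω : Set (Fin N → ℝ)) (hΩo : IsOpen Ω) (hΩb : Bornology.IsBounded Ω)
    (H : Type) [NormedAddCommGroup H] [InnerProductSpace ℝ H] [CompleteSpace H]
    (ι : H →L[ℝ] Lp ℝ 2 (volume.restrict Ω)) (hι : IsCompactOperator ι)
    (mseq : ℕ → (Fin N → ℝ) → ℝ) (m : (Fin N → ℝ) → ℝ)
    (hmseq : ∀ n, Measurable (mseq n)) (hm : Measurable m)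
    (M : ℝ) (hMseq : ∀ n, ∀ᵐ x ∂(volume.restrict Ω), |mseq n x| ≤ M)
    (hM : ∀ᵐ x ∂(volume.restrict Ω), |m x| ≤ M)
    -- weak* convergence `mseq n ⇀* m` in `L^∞(Ω)`
    (hweak : ∀ g : (Fin N → ℝ) → ℝ, IntegrableOn g Ω →
      Tendsto (fun n => ∫ x in Ω, mseq n x * g x) atTop (𝓝 (∫ x in Ω, m x * g x)))
    (Gseq : ℕ → H →L[ℝ] H) (G : H →L[ℝ] H)
    (hGseq : ∀ n, ∀ f φ : H, ⟪Gseq n f, φ⟫ =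
      ∫ x in Ω, mseq n x * (ι f : (Fin N → ℝ) → ℝ) x * (ι φ : (Fin N → ℝ) → ℝ) x)
    (hG : ∀ f φ : H, ⟪G f, φ⟫ =
      ∫ x in Ω, m x * (ι f : (Fin N → ℝ) → ℝ) x * (ι φ : (Fin N → ℝ) → ℝ) x) :
    Tendsto (fun n => ‖Gseq n - G‖) atTop (𝓝 0) :=
  Gm_weakStar_to_norm_continuous_general N Ω H ι hι mseq m hmseq hm M hMseq hM hweak Gseq G hGseq hG
end
end
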